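/- Let (u_p, u_e) be a solution of the bulk system with initial values u_p(0) = α > 0, u_e(0) = β > 0, u_p'(0) = u_e'(0) = 0, and suppose that for some R > 0 both u_p and u_e are positive and nonincreasing on [0, R). Then necessarily F α^{3/2} − E β^{3/2} < 0 and B β^{3/2} − A α^{3/2} < 0. -/

import Mathlib

/-!
Letting `r → 0` in the radial equations `u'' + 2u'/r = φ` gives `φ(0) = 3 u''(0)`, and
`u''(0) ≤ 0` for a nonincreasing profile with `u'(0) = 0`; so both forcings are `≤ 0` at `0`.
If one of them vanished, `BF < EA` would make the other strictly negative, say `u_e''(0) < 0`.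
Then `β − u_e ≍ r²` while `α − u_p = o(r²)`, and by convexity of `t ↦ t^{3/2}` the forcing
`F u_p^{3/2} − E u_e^{3/2}` of `u_p` is positive for small `r > 0`. There `u_p'' > −2u_p'/r ≥ 0`,
so `u_p'` becomes positive, contradicting monotonicity.
-/

open Set Filter

noncomputable section

/-- `(u_p, u_e)` is a solution of the bulk system on the set `s ⊆ [0,∞)` (which should
contain `0`): both functions are `C²` on `s`, satisfy the initial conditions
`u_p(0) = α`, `u_e(0) = β`, `u_p'(0) = u_e'(0) = 0`, are positive on `s`, and satisfy
`u_p'' + (2/r) u_p' = F u_p^{3/2} − E u_e^{3/2}`,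
`u_e'' + (2/r) u_e' = B u_e^{3/2} − A u_p^{3/2}` at every `r ∈ s` with `r > 0`. -/
def IsBulkSolOn (A B E F α β : ℝ) (s : Set ℝ) (up ue : ℝ → ℝ) : Prop :=
  ContDiffOn ℝ 2 up s ∧ ContDiffOn ℝ 2 ue s ∧
  up 0 = α ∧ ue 0 = β ∧
  derivWithin up s 0 = 0 ∧ derivWithin ue s 0 = 0 ∧
  (∀ r ∈ s, 0 < r →
    derivWithin (derivWithin up s) s r + 2 / r * derivWithin up s r
      = F * up r ^ ((3:ℝ)/2) - E * ue r ^ ((3:ℝ)/2) ∧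
    derivWithin (derivWithin ue s) s r + 2 / r * derivWithin ue s r
      = B * ue r ^ ((3:ℝ)/2) - A * up r ^ ((3:ℝ)/2)) ∧
  (∀ r ∈ s, 0 < up r ∧ 0 < ue r)

open Topology

namespace Real

theorem rpow_add_tangent_le_rpow {p a b : ℝ} (hp : 1 ≤ p) (ha : 0 < a) (hb : 0 ≤ b) :
    a ^ p + p * a ^ (p - 1) * (b - a) ≤ b ^ p := by
  have hs : -1 ≤ (b - a) / a := by rw [le_div_iff₀ ha]; linarith
  have hb' : b = a * (1 + (b - a) / a) := by field_simp; ring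
  calc a ^ p + p * a ^ (p - 1) * (b - a) = a ^ p * (1 + p * ((b - a) / a)) := by
        rw [rpow_sub_one ha.ne']; field_simp
    _ ≤ a ^ p * (1 + (b - a) / a) ^ p := by
        gcongr
        exact one_add_mul_self_le_rpow_one_add hs hp
    _ = b ^ p := by rw [← mul_rpow ha.le (by linarith), ← hb']

theorem rpow_sub_one_mul_sub_le_rpow_sub_rpow {p a b : ℝ} (hp : 1 ≤ p) (ha : 0 ≤ a)
    (hab : a ≤ b) : b ^ (p - 1) * (b - a) ≤ b ^ p - a ^ p := by
  have hb : b ^ p = b ^ (p - 1) * b := by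
    rw [← rpow_add_one' (ha.trans hab) (by linarith), sub_add_cancel]
  have ha' : a ^ p = a ^ (p - 1) * a := by
    rw [← rpow_add_one' ha (by linarith), sub_add_cancel]
  have : a ^ (p - 1) ≤ b ^ (p - 1) := rpow_le_rpow ha hab (by linarith)
  rw [hb, ha']
  nlinarith

end Real

theorem ContinuousOn.tendsto_nhdsGT_of_Ico {a b : ℝ} {f : ℝ → ℝ} (hab : a < b)
    (hf : ContinuousOn f (Ico a b)) : Tendsto f (𝓝[>] a) (𝓝 (f a)) :=
  (hf a (left_mem_Ico.2 hab)).tendsto.mono_left <| by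
    rw [nhdsWithin_Ico_eq_nhdsGE hab]; exact nhdsWithin_mono _ Ioi_subset_Ici_self

theorem DifferentiableOn.hasDerivAt_derivWithin_Ico {a b r : ℝ} {f : ℝ → ℝ}
    (hf : DifferentiableOn ℝ f (Ico a b)) (hr : r ∈ Ioo a b) :
    HasDerivAt f (derivWithin f (Ico a b) r) r :=
  (hf r (Ioo_subset_Ico_self hr)).hasDerivWithinAt.hasDerivAt (Ico_mem_nhds hr.1 hr.2)

/-- The Laplacian of `x ↦ f ‖x‖` on `ℝ³`, with the derivatives of the profile taken within `s`. -/
def radialLaplacian (s : Set ℝ) (f : ℝ → ℝ) (r : ℝ) : ℝ :=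
  derivWithin (derivWithin f s) s r + 2 / r * derivWithin f s r

section RadialProfile

variable {R : ℝ} {f : ℝ → ℝ}

local notation "f'" => derivWithin f (Ico 0 R)
local notation "f''" => derivWithin (derivWithin f (Ico 0 R)) (Ico 0 R)

theorem contDiffOn_derivWithin_Ico (hf : ContDiffOn ℝ 2 f (Ico 0 R)) :
    ContDiffOn ℝ 1 f' (Ico 0 R) :=
  hf.derivWithin (uniqueDiffOn_Ico 0 R) (by norm_num)

theorem tendsto_derivWithin_div_nhdsGT_zero (hR : 0 < R) (hf : ContDiffOn ℝ 2 f (Ico 0 R))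
    (hf' : f' 0 = 0) : Tendsto (fun r => f' r / r) (𝓝[>] 0) (𝓝 (f'' 0)) := by
  have hd : HasDerivWithinAt f' (f'' 0) (Ico 0 R) 0 :=
    ((contDiffOn_derivWithin_Ico hf).differentiableOn one_ne_zero 0
      (left_mem_Ico.2 hR)).hasDerivWithinAt
  rw [hasDerivWithinAt_iff_tendsto_slope, Ico_sdiff_left, nhdsWithin_Ioo_eq_nhdsGT hR] at hd
  refine hd.congr fun r => ?_
  rw [slope_def_field, hf', sub_zero, sub_zero]

theorem tendsto_sub_div_sq_nhdsGT_zero (hR : 0 < R) (hf : ContDiffOn ℝ 2 f (Ico 0 R))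
    (hf' : f' 0 = 0) : Tendsto (fun r => (f r - f 0) / r ^ 2) (𝓝[>] 0) (𝓝 (f'' 0 / 2)) := by
  have hdf := hf.differentiableOn two_ne_zero
  refine HasDerivAt.lhopital_zero_right_on_Ico hR
    (fun r hr => (hdf.hasDerivAt_derivWithin_Ico hr).sub_const _)
    (fun r _ => by simpa using hasDerivAt_pow 2 r)
    (hf.continuousOn.sub continuousOn_const) (continuous_pow 2).continuousOn
    (fun r hr => by simp [hr.1.ne']) (sub_self _) (zero_pow two_ne_zero) ?_
  refine ((tendsto_derivWithin_div_nhdsGT_zero hR hf hf').div_const 2).congr fun r => ?_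
  rw [div_div, mul_comm]

theorem derivWithin_derivWithin_zero_nonpos (hR : 0 < R) (hf : ContDiffOn ℝ 2 f (Ico 0 R))
    (hf' : f' 0 = 0) (hm : AntitoneOn f (Ico 0 R)) : f'' 0 ≤ 0 :=
  le_of_tendsto (tendsto_derivWithin_div_nhdsGT_zero hR hf hf') <|
    eventually_nhdsWithin_of_forall fun _ hr => div_nonpos_of_nonpos_of_nonneg
      hm.derivWithin_nonpos (le_of_lt hr)

theorem tendsto_radialLaplacian_nhdsGT_zero (hR : 0 < R) (hf : ContDiffOn ℝ 2 f (Ico 0 R))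
    (hf' : f' 0 = 0) : Tendsto (radialLaplacian (Ico 0 R) f) (𝓝[>] 0) (𝓝 (3 * f'' 0)) := by
  have h₂ : Tendsto f'' (𝓝[>] 0) (𝓝 (f'' 0)) :=
    ((contDiffOn_derivWithin_Ico hf).continuousOn_derivWithin (uniqueDiffOn_Ico 0 R)
      le_rfl).tendsto_nhdsGT_of_Ico hR
  have h := h₂.add ((tendsto_derivWithin_div_nhdsGT_zero hR hf hf').const_mul 2)
  rw [show f'' 0 + 2 * f'' 0 = 3 * f'' 0 by ring] at h
  refine h.congr fun r => ?_
  rw [radialLaplacian, mul_div_assoc', div_mul_eq_mul_div]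

theorem sub_rpow_zero_eq_three_mul_of_radialLaplacian_eq (hR : 0 < R)
    (hf : ContDiffOn ℝ 2 f (Ico 0 R)) (hf' : f' 0 = 0) {g : ℝ → ℝ}
    (hg : ContinuousOn g (Ico 0 R)) {c₁ c₂ p : ℝ} (hp : 0 ≤ p)
    (heq : ∀ r ∈ Ioo 0 R, radialLaplacian (Ico 0 R) f r = c₁ * f r ^ p - c₂ * g r ^ p) :
    c₁ * f 0 ^ p - c₂ * g 0 ^ p = 3 * f'' 0 := by
  have hforcing : Tendsto (fun r => c₁ * f r ^ p - c₂ * g r ^ p) (𝓝[>] 0)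
      (𝓝 (c₁ * f 0 ^ p - c₂ * g 0 ^ p)) :=
    ((hf.continuousOn.rpow_const fun _ _ => Or.inr hp).tendsto_nhdsGT_of_Ico hR).const_mul c₁
      |>.sub <| ((hg.rpow_const fun _ _ => Or.inr hp).tendsto_nhdsGT_of_Ico hR).const_mul c₂
  refine tendsto_nhds_unique hforcing ((tendsto_radialLaplacian_nhdsGT_zero hR hf hf').congr' ?_)
  filter_upwards [Ioo_mem_nhdsGT hR] with r hr using heq r hr

theorem not_antitoneOn_of_radialLaplacian_pos (hR : 0 < R) (hf : ContDiffOn ℝ 2 f (Ico 0 R))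
    (hf' : f' 0 = 0) (hpos : ∀ᶠ r in 𝓝[>] 0, 0 < radialLaplacian (Ico 0 R) f r) :
    ¬ AntitoneOn f (Ico 0 R) := by
  intro hm
  obtain ⟨u, hu, hsub⟩ :=
    mem_nhdsGT_iff_exists_Ioo_subset.1 (hpos.and (Ioo_mem_nhdsGT hR))
  set b := u / 2
  have hb : b ∈ Ioo 0 u := ⟨half_pos hu, half_lt_self hu⟩
  have hIcc : Icc 0 b ⊆ Ico 0 R := fun t ht => ⟨ht.1, ht.2.trans_lt (hsub hb).2.2⟩
  have hdf' := (contDiffOn_derivWithin_Ico hf).differentiableOn one_ne_zero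
  have hmono : StrictMonoOn f' (Icc 0 b) := by
    refine strictMonoOn_of_deriv_pos (convex_Icc 0 b) (hdf'.continuousOn.mono hIcc) ?_
    rw [interior_Icc]
    intro t ht
    obtain ⟨hlap, htR⟩ := hsub ⟨ht.1, ht.2.trans hb.2⟩
    rw [(hdf'.hasDerivAt_derivWithin_Ico htR).deriv]
    have : 2 / t * f' t ≤ 0 :=
      mul_nonpos_of_nonneg_of_nonpos (div_nonneg zero_le_two ht.1.le) hm.derivWithin_nonpos
    rw [radialLaplacian] at hlap
    linarith
  have := hmono (left_mem_Icc.2 hb.1.le) (right_mem_Icc.2 hb.1.le) hb.1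
  rw [hf'] at this
  exact this.not_ge hm.derivWithin_nonpos

end RadialProfile

theorem not_antitoneOn_of_forcing_eq_zero {R c₁ c₂ p : ℝ} {f g : ℝ → ℝ} (hR : 0 < R)
    (hc₁ : 0 ≤ c₁) (hc₂ : 0 < c₂) (hp : 1 ≤ p)
    (hf : ContDiffOn ℝ 2 f (Ico 0 R)) (hg : ContDiffOn ℝ 2 g (Ico 0 R))
    (hf' : derivWithin f (Ico 0 R) 0 = 0) (hg' : derivWithin g (Ico 0 R) 0 = 0)
    (hfpos : ∀ r ∈ Ico 0 R, 0 < f r) (hgpos : ∀ r ∈ Ico 0 R, 0 < g r)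
    (hgm : AntitoneOn g (Ico 0 R))
    (heq : ∀ r ∈ Ioo 0 R, radialLaplacian (Ico 0 R) f r = c₁ * f r ^ p - c₂ * g r ^ p)
    (h₀ : c₁ * f 0 ^ p = c₂ * g 0 ^ p)
    (hg'' : derivWithin (derivWithin g (Ico 0 R)) (Ico 0 R) 0 < 0) :
    ¬ AntitoneOn f (Ico 0 R) := by
  have h0 : (0:ℝ) ∈ Ico 0 R := left_mem_Ico.2 hR
  have hf'' : derivWithin (derivWithin f (Ico 0 R)) (Ico 0 R) 0 = 0 := by
    linarith [sub_rpow_zero_eq_three_mul_of_radialLaplacian_eq hR hf hf' hg.continuousOn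
      (zero_le_one.trans hp) heq]
  set M : ℝ → ℝ := fun r => c₁ * p * f 0 ^ (p - 1) * ((f r - f 0) / r ^ 2)
    - c₂ * g 0 ^ (p - 1) * ((g r - g 0) / r ^ 2)
  have hM : Tendsto M (𝓝[>] 0) (𝓝 (-(c₂ * g 0 ^ (p - 1) * (derivWithin (derivWithin g
      (Ico 0 R)) (Ico 0 R) 0 / 2)))) := by
    have := ((tendsto_sub_div_sq_nhdsGT_zero hR hf hf').const_mul (c₁ * p * f 0 ^ (p - 1))).sub
      ((tendsto_sub_div_sq_nhdsGT_zero hR hg hg').const_mul (c₂ * g 0 ^ (p - 1)))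
    rwa [hf'', zero_div, mul_zero, zero_sub] at this
  have hMpos : 0 < -(c₂ * g 0 ^ (p - 1) * (derivWithin (derivWithin g
      (Ico 0 R)) (Ico 0 R) 0 / 2)) :=
    neg_pos.2 <| mul_neg_of_pos_of_neg (mul_pos hc₂ (Real.rpow_pos_of_pos (hgpos 0 h0) _))
      (div_neg_of_neg_of_pos hg'' two_pos)
  refine not_antitoneOn_of_radialLaplacian_pos hR hf hf' ?_
  filter_upwards [hM.eventually_const_lt hMpos, Ioo_mem_nhdsGT hR] with r hMr hr
  have hrIco : r ∈ Ico 0 R := Ioo_subset_Ico_self hr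
  have htf := Real.rpow_add_tangent_le_rpow hp (hfpos 0 h0) (hfpos r hrIco).le
  have htg := Real.rpow_sub_one_mul_sub_le_rpow_sub_rpow hp (hgpos r hrIco).le
    (hgm h0 hrIco hr.1.le)
  have hr2 : 0 < r ^ 2 := by have := hr.1; positivity
  have hlower : r ^ 2 * M r ≤ c₁ * f r ^ p - c₂ * g r ^ p := by
    have hMr' : r ^ 2 * M r = c₁ * (p * f 0 ^ (p - 1) * (f r - f 0))
        + c₂ * (g 0 ^ (p - 1) * (g 0 - g r)) := by
      simp only [M]; field_simp [hr.1.ne']; ring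
    rw [hMr']
    linear_combination mul_le_mul_of_nonneg_left htf hc₁ + mul_le_mul_of_nonneg_left htg hc₂.le
      - h₀
  rw [heq r hr]
  linarith [mul_pos hr2 hMr]

theorem sub_rpow_zero_neg_of_antitoneOn {R c₁ c₂ d₁ d₂ p : ℝ} {f g : ℝ → ℝ} (hR : 0 < R)
    (hc₁ : 0 ≤ c₁) (hc₂ : 0 < c₂) (hcd : c₁ * d₁ < c₂ * d₂) (hp : 1 ≤ p)
    (hf : ContDiffOn ℝ 2 f (Ico 0 R)) (hg : ContDiffOn ℝ 2 g (Ico 0 R))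
    (hf' : derivWithin f (Ico 0 R) 0 = 0) (hg' : derivWithin g (Ico 0 R) 0 = 0)
    (hfpos : ∀ r ∈ Ico 0 R, 0 < f r) (hgpos : ∀ r ∈ Ico 0 R, 0 < g r)
    (hfm : AntitoneOn f (Ico 0 R)) (hgm : AntitoneOn g (Ico 0 R))
    (heqf : ∀ r ∈ Ioo 0 R, radialLaplacian (Ico 0 R) f r = c₁ * f r ^ p - c₂ * g r ^ p)
    (heqg : ∀ r ∈ Ioo 0 R, radialLaplacian (Ico 0 R) g r = d₁ * g r ^ p - d₂ * f r ^ p) :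
    c₁ * f 0 ^ p - c₂ * g 0 ^ p < 0 := by
  have hp₀ : 0 ≤ p := zero_le_one.trans hp
  have hf₀ := sub_rpow_zero_eq_three_mul_of_radialLaplacian_eq hR hf hf' hg.continuousOn hp₀ heqf
  have hg₀ := sub_rpow_zero_eq_three_mul_of_radialLaplacian_eq hR hg hg' hf.continuousOn hp₀ heqg
  have hf'' := derivWithin_derivWithin_zero_nonpos hR hf hf' hfm
  refine (hf₀.trans_le (by linarith)).lt_of_ne fun h₀ => ?_
  have hfp := Real.rpow_pos_of_pos (hfpos 0 (left_mem_Ico.2 hR)) p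
  have hg₀neg : c₂ * (d₁ * g 0 ^ p - d₂ * f 0 ^ p) < 0 := by
    linear_combination (-d₁) * h₀ + mul_lt_mul_of_pos_right hcd hfp
  refine not_antitoneOn_of_forcing_eq_zero hR hc₁ hc₂ hp hf hg hf' hg' hfpos hgpos hgm heqf
    (sub_eq_zero.1 h₀) ?_ hfm
  linarith [neg_of_mul_neg_right hg₀neg hc₂.le]

theorem stmt11_general (A B E F : ℝ) (hA : 0 < A) (hB : 0 < B) (hE : 0 < E) (hF : 0 < F)
    (hBFEA : B * F < E * A)
    (α β R : ℝ) (hR : 0 < R)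
    (up ue : ℝ → ℝ) (hsol : IsBulkSolOn A B E F α β (Ico 0 R) up ue)
    (hmonop : AntitoneOn up (Ico 0 R)) (hmonoe : AntitoneOn ue (Ico 0 R)) :
    F * α ^ ((3:ℝ)/2) - E * β ^ ((3:ℝ)/2) < 0 ∧
    B * β ^ ((3:ℝ)/2) - A * α ^ ((3:ℝ)/2) < 0 := by
  obtain ⟨hCp, hCe, rfl, rfl, hp', he', heq, hpos⟩ := hsol
  have heqp : ∀ r ∈ Ioo 0 R, radialLaplacian (Ico 0 R) up r
      = F * up r ^ ((3:ℝ)/2) - E * ue r ^ ((3:ℝ)/2) :=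
    fun r hr => (heq r (Ioo_subset_Ico_self hr) hr.1).1
  have heqe : ∀ r ∈ Ioo 0 R, radialLaplacian (Ico 0 R) ue r
      = B * ue r ^ ((3:ℝ)/2) - A * up r ^ ((3:ℝ)/2) :=
    fun r hr => (heq r (Ioo_subset_Ico_self hr) hr.1).2
  exact ⟨sub_rpow_zero_neg_of_antitoneOn hR hF.le hE (by linarith) (by norm_num) hCp hCe hp' he'
      (fun r hr => (hpos r hr).1) (fun r hr => (hpos r hr).2) hmonop hmonoe heqp heqe,
    sub_rpow_zero_neg_of_antitoneOn hR hB.le hA (by linarith) (by norm_num) hCe hCp he' hp'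
      (fun r hr => (hpos r hr).2) (fun r hr => (hpos r hr).1) hmonoe hmonop heqe heqp⟩

/-- Lemma 5.2: only initial values with `F α^{3/2} − E β^{3/2} < 0` and
`B β^{3/2} − A α^{3/2} < 0` can yield solutions with both densities nonincreasing. -/
theorem stmt11 (A B E F : ℝ) (hA : 0 < A) (hB : 0 < B) (hE : 0 < E) (hF : 0 < F)
    (hEF : F < E) (hAB : B < A) (hBFEA : B * F < E * A)
    (α β R : ℝ) (hα : 0 < α) (hβ : 0 < β) (hR : 0 < R)
    (up ue : ℝ → ℝ) (hsol : IsBulkSolOn A B E F α β (Ico 0 R) up ue)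
    (hmonop : AntitoneOn up (Ico 0 R)) (hmonoe : AntitoneOn ue (Ico 0 R)) :
    F * α ^ ((3:ℝ)/2) - E * β ^ ((3:ℝ)/2) < 0 ∧
    B * β ^ ((3:ℝ)/2) - A * α ^ ((3:ℝ)/2) < 0 :=
  stmt11_general A B E F hA hB hE hF hBFEA α β R hR up ue hsol hmonop hmonoe
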